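/- arXiv:2302.11083 — 5 statements merged into one kernel-verified Lean document; each statement's English description precedes it below -/
import Mathlib

section
/- Let u₁ = (a₁, a₂, 0), u₂ = (b₁, 0, b₂), u₃ = (0, c₁, c₂) be three unit vectors in ℝ³ with nonnegative coordinates, and let δ ∈ [0, 1/2]. If u₁·u₂ + u₁·u₃ + u₂·u₃ ≥ 3/2 − δ³/2, then each pairwise dot product satisfies u₁·u₂ ≥ 1/2 − δ, u₁·u₃ ≥ 1/2 − δ, and u₂·u₃ ≥ 1/2 − δ. -/
/-!
Writing `Σ = a₁b₁ + a₂c₁ + b₂c₂`, the three unit-norm conditions give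
`(a₁ - b₁)² + (a₂ - c₁)² + (b₂ - c₂)² = 3 - 2Σ ≤ δ³`. Since
`a₁b₁ = Σ - 1 - ⟪(a₂, b₂) - (c₁, c₂), (c₁, c₂)⟫`, Cauchy–Schwarz bounds the last inner product by
`δ^(3/2)`, and `δ^(3/2) + δ³/2 ≤ δ` on `[0, 1/2]`. The other two products follow by relabelling.
-/

lemma le_sub_cube_half_of_sq_le_cube {p δ : ℝ} (h0 : 0 ≤ δ) (h1 : δ ≤ 1 / 2)
    (hp : p ^ 2 ≤ δ ^ 3) : p ≤ δ - δ ^ 3 / 2 := by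
  have hcube : δ ^ 3 ≤ (δ - δ ^ 3 / 2) ^ 2 := by
    nlinarith [mul_nonneg (mul_nonneg h0 h0) (by linarith : (0:ℝ) ≤ 1 - 3 / 2 * δ),
      mul_nonneg (pow_nonneg h0 3) (by linarith : (0:ℝ) ≤ 1 / 2 - δ), sq_nonneg (δ ^ 3)]
  have hpos : 0 ≤ δ - δ ^ 3 / 2 := by
    nlinarith [mul_nonneg h0 (by linarith : (0:ℝ) ≤ 1 - δ),
      mul_nonneg (mul_nonneg h0 h0) (by linarith : (0:ℝ) ≤ 2 - δ)]
  exact abs_le_of_sq_le_sq' (hp.trans hcube) hpos |>.2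

lemma mul_add_mul_sq_le_sq_add_sq {c₁ c₂ : ℝ} (hc : c₁ ^ 2 + c₂ ^ 2 = 1) (y z : ℝ) :
    (c₁ * y + c₂ * z) ^ 2 ≤ y ^ 2 + z ^ 2 := by
  nlinarith [sq_nonneg (c₁ * z - c₂ * y)]

lemma half_sub_le_mul_of_cube_le {a₁ a₂ b₁ b₂ c₁ c₂ δ : ℝ}
    (hu₁ : a₁ ^ 2 + a₂ ^ 2 = 1) (hu₂ : b₁ ^ 2 + b₂ ^ 2 = 1) (hu₃ : c₁ ^ 2 + c₂ ^ 2 = 1)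
    (h0 : 0 ≤ δ) (h1 : δ ≤ 1 / 2) (hsum : 3 / 2 - δ ^ 3 / 2 ≤ a₁ * b₁ + a₂ * c₁ + b₂ * c₂) :
    1 / 2 - δ ≤ a₁ * b₁ := by
  have hdist : (a₁ - b₁) ^ 2 + (a₂ - c₁) ^ 2 + (b₂ - c₂) ^ 2
      = 3 - 2 * (a₁ * b₁ + a₂ * c₁ + b₂ * c₂) := by
    linear_combination hu₁ + hu₂ + hu₃
  have hprod : a₁ * b₁
      = a₁ * b₁ + a₂ * c₁ + b₂ * c₂ - 1 - (c₁ * (a₂ - c₁) + c₂ * (b₂ - c₂)) := by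
    linear_combination -hu₃
  have hp : (c₁ * (a₂ - c₁) + c₂ * (b₂ - c₂)) ^ 2 ≤ δ ^ 3 := by
    nlinarith [mul_add_mul_sq_le_sq_add_sq hu₃ (a₂ - c₁) (b₂ - c₂), sq_nonneg (a₁ - b₁)]
  linarith [le_sub_cube_half_of_sq_le_cube h0 h1 hp]

theorem stmt4_general (a₁ a₂ b₁ b₂ c₁ c₂ δ : ℝ)
    (hu₁ : a₁ ^ 2 + a₂ ^ 2 = 1) (hu₂ : b₁ ^ 2 + b₂ ^ 2 = 1) (hu₃ : c₁ ^ 2 + c₂ ^ 2 = 1)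
    (hδ : δ ∈ Set.Icc (0:ℝ) (1/2))
    (hsum : 3 / 2 - δ ^ 3 / 2 ≤ a₁ * b₁ + a₂ * c₁ + b₂ * c₂) :
    1 / 2 - δ ≤ a₁ * b₁ ∧ 1 / 2 - δ ≤ a₂ * c₁ ∧ 1 / 2 - δ ≤ b₂ * c₂ := by
  obtain ⟨h0, h1⟩ := hδ
  have hu₁' : a₂ ^ 2 + a₁ ^ 2 = 1 := by rwa [add_comm]
  have hu₂' : b₂ ^ 2 + b₁ ^ 2 = 1 := by rwa [add_comm]
  have hu₃' : c₂ ^ 2 + c₁ ^ 2 = 1 := by rwa [add_comm]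
  refine ⟨half_sub_le_mul_of_cube_le hu₁ hu₂ hu₃ h0 h1 hsum,
    half_sub_le_mul_of_cube_le hu₁' hu₃ hu₂ h0 h1 (by linarith),
    half_sub_le_mul_of_cube_le hu₂' hu₃' hu₁ h0 h1 (by linarith)⟩

/-- For unit vectors u₁=(a₁,a₂,0), u₂=(b₁,0,b₂), u₃=(0,c₁,c₂) in ℝ³ with nonnegative
coordinates and δ ∈ [0,1/2]: if the sum of pairwise dot products is ≥ 3/2 − δ³/2, then
each pairwise dot product is ≥ 1/2 − δ. -/
theorem stmt4 (a₁ a₂ b₁ b₂ c₁ c₂ δ : ℝ)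
    (ha₁ : 0 ≤ a₁) (ha₂ : 0 ≤ a₂) (hb₁ : 0 ≤ b₁) (hb₂ : 0 ≤ b₂)
    (hc₁ : 0 ≤ c₁) (hc₂ : 0 ≤ c₂)
    (hu₁ : a₁ ^ 2 + a₂ ^ 2 = 1) (hu₂ : b₁ ^ 2 + b₂ ^ 2 = 1) (hu₃ : c₁ ^ 2 + c₂ ^ 2 = 1)
    (hδ : δ ∈ Set.Icc (0:ℝ) (1/2))
    (hsum : 3 / 2 - δ ^ 3 / 2 ≤ a₁ * b₁ + a₂ * c₁ + b₂ * c₂) :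
    1 / 2 - δ ≤ a₁ * b₁ ∧ 1 / 2 - δ ≤ a₂ * c₁ ∧ 1 / 2 - δ ≤ b₂ * c₂ :=
  stmt4_general a₁ a₂ b₁ b₂ c₁ c₂ δ hu₁ hu₂ hu₃ hδ hsum
end

section
/- Fix distinct v₀*, w₀* ∈ 𝔽₂ⁿ and set s* := v₀* + w₀*. Let 𝒜₁ be the set of unordered pairs {v₁, w₁} of distinct vectors in 𝔽₂ⁿ with v₁ + w₁ = s*, so |𝒜₁| = 2^{n−1}. Let R[(v₀*, w₀*)] be the set of pairs (A, B) such that: A = (A₀, A₁) with A₀ = {v₀*, w₀*} and A₁ ∈ 𝒜₁; B = (B₀, B₁) satisfies the configuration condition, with B₀ a pair of distinct vectors containing v₀* and B₁ an unordered pair of distinct vectors whose sum equals the sum of the elements of B₀; |A₀ ∩ B₀| = 1 with common element v₀*; and |A₁ ∩ B₁| = 1. Then |R[(v₀*, w₀*)]| = 2^{2n} − 2^{n+1}. -/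
namespace Stmt12Aux

variable {n : ℕ}

lemma addself (v : Fin n → ZMod 2) : v + v = 0 := by
  funext i; exact CharTwo.add_self_eq_zero _

lemma add_eq_zero {a b : Fin n → ZMod 2} (h : a + b = 0) : a = b := by
  have : a + b + b = 0 + b := by rw [h]
  rwa [add_assoc, addself, add_zero, zero_add] at this

lemma self_eq_add {x t : Fin n → ZMod 2} : x = x + t ↔ t = 0 := by
  constructor
  · intro h; have := h.symm; rwa [add_eq_left] at this
  · rintro rfl; simp

lemma pair_card {x t : Fin n → ZMod 2} (ht : t ≠ 0) :
    ({x, x + t} : Finset _).card = 2 := by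
  rw [Finset.card_pair]; intro h; exact ht (self_eq_add.mp h)

lemma pair_sum {x t : Fin n → ZMod 2} (ht : t ≠ 0) :
    ({x, x + t} : Finset _).sum id = t := by
  rw [Finset.sum_pair (fun h => ht (self_eq_add.mp h))]
  simp only [id]
  rw [← add_assoc, addself, zero_add]

lemma pair_eq {S : Finset (Fin n → ZMod 2)} {t x : Fin n → ZMod 2}
    (hc : S.card = 2) (hs : S.sum id = t) (hx : x ∈ S) : S = {x, x + t} := by
  obtain ⟨a, b, hab, rfl⟩ := Finset.card_eq_two.mp hc
  rw [Finset.sum_pair hab] at hs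
  simp only [id] at hs
  rcases Finset.mem_insert.mp hx with rfl | hb
  · rw [← hs, ← add_assoc, addself, zero_add]
  · rcases Finset.mem_singleton.mp hb with rfl
    rw [← hs, Finset.pair_comm a x]
    congr 1
    rw [add_comm a x, ← add_assoc, addself, zero_add]

lemma sum_ne_zero {S : Finset (Fin n → ZMod 2)} (hc : S.card = 2) : S.sum id ≠ 0 := by
  obtain ⟨a, b, hab, rfl⟩ := Finset.card_eq_two.mp hc
  rw [Finset.sum_pair hab]
  exact fun h => hab (add_eq_zero h)

lemma inter_pair {x s t : Fin n → ZMod 2} (hs : s ≠ 0) (hst : s ≠ t) :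
    ({x, x + s} : Finset _) ∩ {x, x + t} = {x} := by
  ext a
  simp only [Finset.mem_inter, Finset.mem_insert, Finset.mem_singleton]
  constructor
  · rintro ⟨rfl | rfl, h2⟩
    · rfl
    · rcases h2 with h | h
      · exact absurd (self_eq_add.mp h.symm) hs
      · exact absurd (add_left_cancel h) hst
  · rintro rfl; exact ⟨Or.inl rfl, Or.inl rfl⟩

variable (v₀ w₀ : Fin n → ZMod 2)

abbrev T := {p : Finset (Fin n → ZMod 2) × Finset (Fin n → ZMod 2) ×
        Finset (Fin n → ZMod 2) //
      p.1.card = 2 ∧ p.1.sum id = v₀ + w₀ ∧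
      p.2.1.card = 2 ∧ p.2.2.card = 2 ∧ p.2.1.sum id = p.2.2.sum id ∧
      ({v₀, w₀} : Finset (Fin n → ZMod 2)) ∩ p.2.1 = {v₀} ∧
      (p.1 ∩ p.2.2).card = 1}

variable {v₀ w₀}

lemma hs0 (hvw : v₀ ≠ w₀) : v₀ + w₀ ≠ 0 := fun h => hvw (add_eq_zero h)

lemma fwd_proof (hvw : v₀ ≠ w₀) (q : {u : Fin n → ZMod 2 // u ≠ v₀ ∧ u ≠ w₀} × (Fin n → ZMod 2)) :
    let p : Finset (Fin n → ZMod 2) × Finset (Fin n → ZMod 2) × Finset (Fin n → ZMod 2) :=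
      ⟨{q.2, q.2 + (v₀ + w₀)}, {v₀, q.1.1}, {q.2, q.2 + (v₀ + q.1.1)}⟩
    p.1.card = 2 ∧ p.1.sum id = v₀ + w₀ ∧
      p.2.1.card = 2 ∧ p.2.2.card = 2 ∧ p.2.1.sum id = p.2.2.sum id ∧
      ({v₀, w₀} : Finset (Fin n → ZMod 2)) ∩ p.2.1 = {v₀} ∧
      (p.1 ∩ p.2.2).card = 1 := by
  obtain ⟨⟨u, hu1, hu2⟩, x⟩ := q
  have ht0 : v₀ + u ≠ 0 := fun h => hu1 (add_eq_zero h).symm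
  have hst : v₀ + w₀ ≠ v₀ + u := fun h => hu2 (add_left_cancel h).symm
  refine ⟨pair_card (hs0 hvw),
    pair_sum (hs0 hvw), Finset.card_pair (Ne.symm hu1), pair_card ht0, ?_, ?_, ?_⟩
  · rw [pair_sum ht0, Finset.sum_pair (Ne.symm hu1)]; simp only [id]
  · ext a
    simp only [Finset.mem_inter, Finset.mem_insert, Finset.mem_singleton]
    constructor
    · rintro ⟨rfl | rfl, h2⟩
      · rfl
      · rcases h2 with rfl | rfl
        · exact absurd rfl hvw.symm
        · exact absurd rfl (Ne.symm hu2)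
    · rintro rfl; exact ⟨Or.inl rfl, Or.inl rfl⟩
  · rw [inter_pair (hs0 hvw) hst]; exact Finset.card_singleton x

def fwd (hvw : v₀ ≠ w₀) (q : {u : Fin n → ZMod 2 // u ≠ v₀ ∧ u ≠ w₀} × (Fin n → ZMod 2)) :
    T v₀ w₀ :=
  ⟨⟨{q.2, q.2 + (v₀ + w₀)}, {v₀, q.1.1}, {q.2, q.2 + (v₀ + q.1.1)}⟩, fwd_proof hvw q⟩

lemma fwd_val (hvw : v₀ ≠ w₀) (u : {u : Fin n → ZMod 2 // u ≠ v₀ ∧ u ≠ w₀}) (x : Fin n → ZMod 2) :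
    (fwd hvw (u, x)).1 = ⟨{x, x + (v₀ + w₀)}, {v₀, u.1}, {x, x + (v₀ + u.1)}⟩ := rfl

lemma fwd_bij (hvw : v₀ ≠ w₀) : Function.Bijective (fwd (n := n) hvw) := by
  constructor
  · rintro ⟨⟨u, hu1, hu2⟩, x⟩ ⟨⟨u', hu1', hu2'⟩, x'⟩ h
    have h' := congrArg Subtype.val h
    rw [fwd_val, fwd_val] at h'
    simp only [Prod.mk.injEq] at h'
    obtain ⟨hA, hB0, hB1⟩ := h'
    have hu : u = u' := by
      have hm : u ∈ ({v₀, u'} : Finset _) := hB0 ▸ (Finset.mem_insert_of_mem (Finset.mem_singleton_self u))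
      rcases Finset.mem_insert.mp hm with h | h
      · exact absurd h hu1
      · exact Finset.mem_singleton.mp h
    have hst : v₀ + w₀ ≠ v₀ + u := fun hh => hu2 (add_left_cancel hh).symm
    have hst' : v₀ + w₀ ≠ v₀ + u' := fun hh => hu2' (add_left_cancel hh).symm
    have e1 : ({x, x + (v₀ + w₀)} : Finset _) ∩ {x, x + (v₀ + u)} = {x} :=
      inter_pair (hs0 hvw) hst
    have e2 : ({x', x' + (v₀ + w₀)} : Finset _) ∩ {x', x' + (v₀ + u')} = {x'} :=
      inter_pair (hs0 hvw) hst'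
    rw [hA, hB1] at e1
    rw [e2] at e1
    have hx : x' = x := Finset.singleton_injective e1
    subst hu hx
    rfl
  · rintro ⟨⟨A, B0, B1⟩, h1, h2, h3, h4, h5, h6, h7⟩
    have hv0 : v₀ ∈ B0 := by
      have : v₀ ∈ ({v₀, w₀} : Finset _) ∩ B0 := h6 ▸ Finset.mem_singleton_self v₀
      exact (Finset.mem_inter.mp this).2
    have hw0 : w₀ ∉ B0 := by
      intro hw
      have : w₀ ∈ ({v₀, w₀} : Finset _) ∩ B0 :=
        Finset.mem_inter.mpr ⟨Finset.mem_insert_of_mem (Finset.mem_singleton_self w₀), hw⟩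
      rw [h6, Finset.mem_singleton] at this
      exact hvw this.symm
    set t0 := B0.sum id with ht0def
    have hB0 : B0 = {v₀, v₀ + t0} := pair_eq h3 rfl hv0
    set u := v₀ + t0 with hudef
    have hu1 : u ≠ v₀ := by
      intro h
      exact sum_ne_zero h3 (self_eq_add.mp h.symm)
    have hu2 : u ≠ w₀ := by
      intro h
      apply hw0
      rw [hB0, ← h]
      exact Finset.mem_insert_of_mem (Finset.mem_singleton_self u)
    obtain ⟨x, hx⟩ := Finset.card_eq_one.mp h7
    have hxA : x ∈ A := (Finset.mem_inter.mp (hx ▸ Finset.mem_singleton_self x)).1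
    have hxB : x ∈ B1 := (Finset.mem_inter.mp (hx ▸ Finset.mem_singleton_self x)).2
    have hA : A = {x, x + (v₀ + w₀)} := pair_eq h1 h2 hxA
    have hB1 : B1 = {x, x + t0} := pair_eq h4 h5.symm hxB
    have hvu : v₀ + u = t0 := by rw [hudef, ← add_assoc, addself, zero_add]
    refine ⟨(⟨u, hu1, hu2⟩, x), ?_⟩
    apply Subtype.ext
    rw [fwd_val]
    simp only [Prod.mk.injEq]
    exact ⟨hA.symm, hB0.symm, by rw [hvu, hB1]⟩

end Stmt12Aux

open Stmt12Aux in
/-- For fixed distinct v₀*, w₀* ∈ 𝔽₂ⁿ, the set R[(v₀*, w₀*)] of pairs (A, B) of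
configurations A = ({v₀*, w₀*}, A₁), B = (B₀, B₁) (each configuration being a pair of
2-element sets with equal element-sums) with A₀ ∩ B₀ = {v₀*} and |A₁ ∩ B₁| = 1 has
cardinality 2^{2n} − 2^{n+1}.  Pairs (A, B) are parameterized by (A₁, B₀, B₁). -/
theorem stmt12 {n : ℕ} (v₀ w₀ : Fin n → ZMod 2) (hvw : v₀ ≠ w₀) :
    Nat.card {p : Finset (Fin n → ZMod 2) × Finset (Fin n → ZMod 2) ×
        Finset (Fin n → ZMod 2) //
      p.1.card = 2 ∧ p.1.sum id = v₀ + w₀ ∧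
      p.2.1.card = 2 ∧ p.2.2.card = 2 ∧ p.2.1.sum id = p.2.2.sum id ∧
      ({v₀, w₀} : Finset (Fin n → ZMod 2)) ∩ p.2.1 = {v₀} ∧
      (p.1 ∩ p.2.2).card = 1} = 2 ^ (2 * n) - 2 ^ (n + 1) := by
  have := Nat.card_eq_of_bijective _ (fwd_bij hvw)
  rw [← this]
  have hcardV : Nat.card (Fin n → ZMod 2) = 2 ^ n := by
    simp [Nat.card_eq_fintype_card]
  have hsub : Nat.card {u : Fin n → ZMod 2 // u ≠ v₀ ∧ u ≠ w₀} = 2 ^ n - 2 := by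
    have e : ∀ u : Fin n → ZMod 2,
        (u ≠ v₀ ∧ u ≠ w₀) ↔ ¬ (u ∈ ({v₀, w₀} : Finset (Fin n → ZMod 2))) := by
      intro u; simp [not_or]
    rw [Nat.card_eq_fintype_card, Fintype.card_congr (Equiv.subtypeEquivRight e),
      Fintype.card_subtype_compl]
    congr 1
    · simpa using hcardV
    · rw [Fintype.card_coe, Finset.card_pair hvw]
  have h2 : (2:ℕ) ^ (2 * n) = 2 ^ n * 2 ^ n := by rw [two_mul, pow_add]
  have h3 : (2:ℕ) ^ (n + 1) = 2 * 2 ^ n := by rw [pow_succ, mul_comm]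
  rw [Nat.card_prod, hsub, hcardV, h2, h3, Nat.sub_mul]
end

section
/- Fix distinct v₀*, w₀* ∈ 𝔽₂ⁿ and A₁ ≠ A₁' ∈ 𝒜₁ (unordered pairs summing to v₀* + w₀*, hence disjoint). Write A₁ = {v₁, w₁}, A₁' = {v₁', w₁'}. Then there are exactly four configurations B such that both ((A₀*, A₁), B) and ((A₀*, A₁'), B) lie in R[(v₀*, w₀*)], namely B ∈ { ({v₀*, v₀*+v₁+v₁'}, {v₁, v₁'}), ({v₀*, v₀*+w₁+w₁'}, {w₁, w₁'}), ({v₀*, v₀*+v₁+w₁'}, {v₁, w₁'}), ({v₀*, v₀*+w₁+v₁'}, {w₁, v₁'}) }, where A₀* = {v₀*, w₀*}. -/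
/-!
Every `B` in the set has `v₀ ∈ B₀` and meets each of the disjoint fibers `A₁`, `A₁'`, so `B₁`
consists of one point `x ∈ A₁` and one point `y ∈ A₁'`; in characteristic two the equal sums
then force `B₀ = {v₀, v₀ + x + y}`. Conversely each of the four choices of `(x, y)` gives such a
`B`: `v₀ + x + y ≠ w₀` because otherwise `y = v₀ + w₀ + x` would be the partner of `x` in `A₁`.
-/

open Finset

namespace Finset

variable {α : Type*} [DecidableEq α]

theorem eq_pair_of_card_eq_two {s : Finset α} {x y : α} (hs : #s = 2) (hx : x ∈ s) (hy : y ∈ s)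
    (hxy : x ≠ y) : s = {x, y} :=
  (eq_of_subset_of_card_le (by simp [insert_subset_iff, hx, hy]) (by rw [hs, card_pair hxy])).symm

theorem exists_eq_pair_of_card_eq_two {s : Finset α} {x : α} (hs : #s = 2) (hx : x ∈ s) :
    ∃ y, x ≠ y ∧ s = {x, y} := by
  obtain ⟨y, hy⟩ := card_eq_one.1 (by rw [card_erase_of_mem hx, hs] : #(s.erase x) = 1)
  refine ⟨y, (ne_of_mem_erase (hy ▸ mem_singleton_self y)).symm, ?_⟩
  rw [← insert_erase hx, hy]

theorem inter_pair_eq_singleton {t : Finset α} {x y : α} (hx : x ∈ t) (hy : y ∉ t) :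
    t ∩ {x, y} = {x} := by
  rw [inter_comm, insert_inter_of_mem hx, singleton_inter_of_notMem hy, insert_empty]

end Finset

section PairsWithGivenSum

variable {G : Type*} [AddCommGroup G] [DecidableEq G]

theorem pair_eq_pair_sub_of_mem {a b x : G} (hx : x ∈ ({a, b} : Finset G)) :
    ({a, b} : Finset G) = {x, a + b - x} := by
  rcases mem_insert.1 hx with rfl | hx
  · rw [add_sub_cancel_left]
  · rw [mem_singleton.1 hx, pair_comm, add_sub_cancel_right]

theorem mem_pair_of_add_eq_add {a b x y : G} (hx : x ∈ ({a, b} : Finset G)) (h : x + y = a + b) :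
    y ∈ ({a, b} : Finset G) := by
  rw [pair_eq_pair_sub_of_mem hx, ← eq_sub_of_add_eq' h]
  exact mem_insert_of_mem (mem_singleton_self y)

/-- A pair is determined by its sum and any one of its elements. -/
theorem disjoint_pair_of_add_eq_add {a b c d : G} (h : a + b = c + d)
    (hne : ({a, b} : Finset G) ≠ {c, d}) : Disjoint ({a, b} : Finset G) {c, d} := by
  rw [disjoint_left]
  intro x hab hcd
  exact hne (by rw [pair_eq_pair_sub_of_mem hab, pair_eq_pair_sub_of_mem hcd, h])

end PairsWithGivenSum

section CharTwo

variable {G : Type*} [AddCommGroup G] [Module (ZMod 2) G] [DecidableEq G]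

theorem eq_pairs_of_sum_eq_sum {B₀ B₁ : Finset G} {v x y : G} (h₀ : #B₀ = 2) (h₁ : #B₁ = 2)
    (hsum : B₀.sum id = B₁.sum id) (hv : v ∈ B₀) (hx : x ∈ B₁) (hy : y ∈ B₁) (hxy : x ≠ y) :
    B₀ = {v, v + x + y} ∧ B₁ = {x, y} := by
  obtain ⟨z, hvz, rfl⟩ := exists_eq_pair_of_card_eq_two h₀ hv
  obtain rfl := eq_pair_of_card_eq_two h₁ hx hy hxy
  rw [sum_pair hvz, sum_pair hxy, id, id] at hsum
  rw [eq_sub_of_add_eq' hsum, ZModModule.sub_eq_add, add_comm, ← add_assoc]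
  exact ⟨rfl, rfl⟩

variable {v₀ w₀ v₁ w₁ : G} {A' : Finset G}

theorem conditions_iff_exists_eq_pairs (hs : v₁ + w₁ = v₀ + w₀)
    (hdisj : Disjoint ({v₁, w₁} : Finset G) A') {B : Finset G × Finset G} :
    (#B.1 = 2 ∧ #B.2 = 2 ∧ B.1.sum id = B.2.sum id ∧ {v₀, w₀} ∩ B.1 = {v₀} ∧
        #({v₁, w₁} ∩ B.2) = 1 ∧ #(A' ∩ B.2) = 1) ↔
      ∃ x ∈ ({v₁, w₁} : Finset G), ∃ y ∈ A', B = ({v₀, v₀ + x + y}, {x, y}) := by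
  constructor
  · rintro ⟨h₀, h₁, hsum, hB₀, hA, hA'⟩
    obtain ⟨x, hx⟩ := (card_pos.1 (hA ▸ Nat.one_pos)).exists_mem
    obtain ⟨y, hy⟩ := (card_pos.1 (hA' ▸ Nat.one_pos)).exists_mem
    rw [mem_inter] at hx hy
    have hv₀ : v₀ ∈ B.1 := (mem_inter.1 (hB₀ ▸ mem_singleton_self v₀)).2
    have hxy : x ≠ y := ne_of_mem_of_not_mem hx.1 (disjoint_right.1 hdisj hy.1)
    obtain ⟨hB₁, hB₂⟩ := eq_pairs_of_sum_eq_sum h₀ h₁ hsum hv₀ hx.2 hy.2 hxy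
    exact ⟨x, hx.1, y, hy.1, Prod.ext hB₁ hB₂⟩
  · rintro ⟨x, hx, y, hy, rfl⟩
    have hyA : y ∉ ({v₁, w₁} : Finset G) := disjoint_right.1 hdisj hy
    have hxy : x ≠ y := ne_of_mem_of_not_mem hx hyA
    have hzv : v₀ + x + y ≠ v₀ := by
      rwa [add_assoc, Ne, add_eq_left, ← ZModModule.sub_eq_add, sub_eq_zero]
    have hzw : v₀ + x + y ∉ ({v₀, w₀} : Finset G) := by
      simp only [mem_insert, mem_singleton, not_or]
      refine ⟨hzv, fun h => hyA (mem_pair_of_add_eq_add hx ?_)⟩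
      rw [hs, ← h, ← add_assoc, ← add_assoc, ZModModule.add_self, zero_add]
    refine ⟨card_pair hzv.symm, card_pair hxy, ?_,
      inter_pair_eq_singleton (mem_insert_self _ _) hzw,
      by rw [inter_pair_eq_singleton hx hyA, card_singleton], ?_⟩
    · simp only [sum_pair hzv.symm, sum_pair hxy, id, ← add_assoc, ZModModule.add_self, zero_add]
    · rw [pair_comm x y, inter_pair_eq_singleton hy (disjoint_left.1 hdisj hx), card_singleton]

end CharTwo

theorem stmt13_general {n : ℕ} (v₀ w₀ v₁ w₁ v₁' w₁' : Fin n → ZMod 2)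
    (hs : v₁ + w₁ = v₀ + w₀) (hs' : v₁' + w₁' = v₀ + w₀)
    (hAA : ({v₁, w₁} : Finset (Fin n → ZMod 2)) ≠ {v₁', w₁'}) :
    {B : Finset (Fin n → ZMod 2) × Finset (Fin n → ZMod 2) |
        B.1.card = 2 ∧ B.2.card = 2 ∧ B.1.sum id = B.2.sum id ∧
        ({v₀, w₀} : Finset (Fin n → ZMod 2)) ∩ B.1 = {v₀} ∧
        (({v₁, w₁} : Finset (Fin n → ZMod 2)) ∩ B.2).card = 1 ∧
        (({v₁', w₁'} : Finset (Fin n → ZMod 2)) ∩ B.2).card = 1}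
      = {(({v₀, v₀ + v₁ + v₁'} : Finset (Fin n → ZMod 2)),
            ({v₁, v₁'} : Finset (Fin n → ZMod 2))),
         ({v₀, v₀ + w₁ + w₁'}, {w₁, w₁'}),
         ({v₀, v₀ + v₁ + w₁'}, {v₁, w₁'}),
         ({v₀, v₀ + w₁ + v₁'}, {w₁, v₁'})} := by
  have hdisj := disjoint_pair_of_add_eq_add (hs.trans hs'.symm) hAA
  ext B
  rw [Set.mem_ofPred_eq, conditions_iff_exists_eq_pairs hs hdisj]
  simp only [mem_insert, mem_singleton, exists_eq_or_imp, exists_eq_left, Set.mem_insert_iff,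
    Set.mem_singleton_iff]
  tauto

/-- Fix distinct v₀*, w₀* ∈ 𝔽₂ⁿ and distinct pairs A₁ = {v₁,w₁}, A₁' = {v₁',w₁'} both
summing to v₀* + w₀*.  The configurations B = (B₀, B₁) such that both ((A₀*, A₁), B) and
((A₀*, A₁'), B) lie in R[(v₀*, w₀*)] are exactly the four listed ones. -/
theorem stmt13 {n : ℕ} (v₀ w₀ v₁ w₁ v₁' w₁' : Fin n → ZMod 2)
    (hvw : v₀ ≠ w₀) (h1 : v₁ ≠ w₁) (h1' : v₁' ≠ w₁')
    (hs : v₁ + w₁ = v₀ + w₀) (hs' : v₁' + w₁' = v₀ + w₀)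
    (hAA : ({v₁, w₁} : Finset (Fin n → ZMod 2)) ≠ {v₁', w₁'}) :
    {B : Finset (Fin n → ZMod 2) × Finset (Fin n → ZMod 2) |
        B.1.card = 2 ∧ B.2.card = 2 ∧ B.1.sum id = B.2.sum id ∧
        ({v₀, w₀} : Finset (Fin n → ZMod 2)) ∩ B.1 = {v₀} ∧
        (({v₁, w₁} : Finset (Fin n → ZMod 2)) ∩ B.2).card = 1 ∧
        (({v₁', w₁'} : Finset (Fin n → ZMod 2)) ∩ B.2).card = 1}
      = {(({v₀, v₀ + v₁ + v₁'} : Finset (Fin n → ZMod 2)),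
            ({v₁, v₁'} : Finset (Fin n → ZMod 2))),
         ({v₀, v₀ + w₁ + w₁'}, {w₁, w₁'}),
         ({v₀, v₀ + v₁ + w₁'}, {v₁, w₁'}),
         ({v₀, v₀ + w₁ + v₁'}, {w₁, v₁'})} :=
  stmt13_general v₀ w₀ v₁ w₁ v₁' w₁' hs hs' hAA
end

section
/- Let {x₁, …, x_I} be unit vectors in ℂ² (d = 2) with pairwise inner products bounded: max_{i≠j} |⟨x_i, x_j⟩| ≤ 1 − ε⁴ for some ε ∈ (0, 1/8). Then I ≤ 1/ε⁸. -/
/-!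
Send a unit vector `u ∈ ℂ²` to its Bloch vector `b(u) ∈ ℝ³`, the unit vector with
`uu* = (1 + b(u) · σ) / 2`. Since `⟪b(u), b(w)⟫ = 2 |⟪u, w⟫|² - 1`, the bound
`|⟪xᵢ, xⱼ⟫| ≤ 1 - ε⁴` makes the Bloch vectors `2ε²`-separated points of the unit sphere in `ℝ³`.
The balls of radius `ε²` around them are disjoint and lie in the ball of radius `1 + ε²`, so
comparing volumes gives `I ε⁶ ≤ (1 + ε²)³`, which is at most `1 / ε²` for `ε < 1/8`.
-/

open Metric MeasureTheory Module ComplexConjugate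

theorem card_mul_pow_le_of_separated {E : Type*} [NormedAddCommGroup E] [NormedSpace ℝ E]
    [FiniteDimensional ℝ E] {ι : Type*} [Fintype ι] (v : ι → E) {r R : ℝ} (hr : 0 < r)
    (hR : 0 ≤ R) (hv : ∀ i, ‖v i‖ ≤ R) (hsep : Pairwise fun i j => 2 * r ≤ dist (v i) (v j)) :
    Fintype.card ι * r ^ finrank ℝ E ≤ (R + r) ^ finrank ℝ E := by
  borelize E
  set μ : Measure E := Measure.addHaar
  have hdisj : Pairwise (Function.onFun Disjoint fun i => ball (v i) r) := fun i j hij =>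
    ball_disjoint_ball (by linarith [hsep hij])
  have hsub : (⋃ i, ball (v i) r) ⊆ ball 0 (R + r) :=
    Set.iUnion_subset fun i => ball_subset_ball' (by rw [dist_zero_right]; linarith [hv i])
  have hvol : Fintype.card ι * ENNReal.ofReal (r ^ finrank ℝ E) * μ (ball 0 1)
      ≤ ENNReal.ofReal ((R + r) ^ finrank ℝ E) * μ (ball 0 1) := by
    calc _ = ∑ i, μ (ball (v i) r) := by
          simp [Measure.addHaar_ball_of_pos μ _ hr, mul_assoc]
      _ = μ (⋃ i, ball (v i) r) := by
          rw [measure_iUnion hdisj fun _ => measurableSet_ball, tsum_fintype]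
      _ ≤ μ (ball 0 (R + r)) := measure_mono hsub
      _ = _ := Measure.addHaar_ball_of_pos μ _ (by linarith)
  rwa [ENNReal.mul_le_mul_iff_left (measure_ball_pos μ _ one_pos).ne' measure_ball_lt_top.ne,
    ← ENNReal.ofReal_natCast, ← ENNReal.ofReal_mul (by positivity),
    ENNReal.ofReal_le_ofReal_iff (by positivity)] at hvol

noncomputable def blochVector (u : EuclideanSpace ℂ (Fin 2)) : EuclideanSpace ℝ (Fin 3) :=
  !₂[2 * (u 0 * conj (u 1)).re, 2 * (u 0 * conj (u 1)).im, ‖u 0‖ ^ 2 - ‖u 1‖ ^ 2]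

theorem inner_blochVector (u w : EuclideanSpace ℂ (Fin 2)) :
    inner ℝ (blochVector u) (blochVector w) = 2 * ‖inner ℂ u w‖ ^ 2 - ‖u‖ ^ 2 * ‖w‖ ^ 2 := by
  simp only [blochVector, EuclideanSpace.norm_sq_eq, PiLp.inner_apply, RCLike.inner_apply,
    Fin.sum_univ_two, Fin.sum_univ_three, Complex.sq_norm, Complex.normSq_apply, Complex.mul_re,
    Complex.mul_im, Complex.add_re, Complex.add_im, Complex.conj_re, Complex.conj_im,
    Matrix.cons_val_zero, Matrix.cons_val_one, Matrix.cons_val, Real.ringHom_apply]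
  ring

theorem norm_blochVector (u : EuclideanSpace ℂ (Fin 2)) : ‖blochVector u‖ = ‖u‖ ^ 2 := by
  have h := inner_blochVector u u
  rw [real_inner_self_eq_norm_sq, inner_self_eq_norm_sq_to_K, norm_pow, RCLike.norm_ofReal,
    abs_norm] at h
  exact (sq_eq_sq₀ (norm_nonneg _) (by positivity)).1 (by rw [h]; ring)

theorem dist_blochVector_sq {u w : EuclideanSpace ℂ (Fin 2)} (hu : ‖u‖ = 1) (hw : ‖w‖ = 1) :
    dist (blochVector u) (blochVector w) ^ 2 = 4 * (1 - ‖inner ℂ u w‖ ^ 2) := by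
  rw [dist_eq_norm, norm_sub_sq_real, norm_blochVector, norm_blochVector, inner_blochVector,
    hu, hw]
  ring

/-- Unit vectors in ℂ² with pairwise inner products of absolute value at most 1 − ε⁴
(ε ∈ (0,1/8)) number at most 1/ε⁸. -/
theorem stmt14 (ε : ℝ) (hε : ε ∈ Set.Ioo (0:ℝ) (1/8)) (I : ℕ)
    (x : Fin I → EuclideanSpace ℂ (Fin 2))
    (hnorm : ∀ i, ‖x i‖ = 1)
    (hij : ∀ i j, i ≠ j → ‖(inner ℂ (x i) (x j) : ℂ)‖ ≤ 1 - ε ^ 4) :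
    (I : ℝ) ≤ 1 / ε ^ 8 := by
  obtain ⟨hε0, hε8⟩ := hε
  have hsep : Pairwise fun i j => 2 * ε ^ 2 ≤ dist (blochVector (x i)) (blochVector (x j)) := by
    intro i j hne
    refine (pow_le_pow_iff_left₀ (by positivity) dist_nonneg two_ne_zero).1 ?_
    rw [dist_blochVector_sq (hnorm i) (hnorm j)]
    nlinarith [hij i j hne, norm_nonneg (inner ℂ (x i) (x j))]
  have hpack := card_mul_pow_le_of_separated (fun i => blochVector (x i)) (pow_pos hε0 2)
    zero_le_one (fun i => by rw [norm_blochVector, hnorm, one_pow]) hsep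
  rw [finrank_euclideanSpace, Fintype.card_fin, Fintype.card_fin] at hpack
  have hε2 : ε ^ 2 ≤ 1 / 64 := by nlinarith
  rw [le_div_iff₀ (by positivity)]
  calc (I : ℝ) * ε ^ 8 = I * (ε ^ 2) ^ 3 * ε ^ 2 := by ring
    _ ≤ (1 + ε ^ 2) ^ 3 * ε ^ 2 := by gcongr
    _ ≤ (1 + 1 / 64) ^ 3 * (1 / 64) := by gcongr
    _ ≤ 1 := by norm_num
end

section
/- Let Π₀ and Π₁ be orthogonal projectors on a finite-dimensional Hilbert space with Π₀Π₁ = 0, let D be a projector, and let |ψ⟩ be a unit vector in the image of Π₀ + Π₁. Then ‖Π₁ D Π₀ |ψ⟩‖² + ‖Π₀ D Π₁ |ψ⟩‖² ≥ (1/2) · ( ‖D|ψ⟩‖² − (‖DΠ₀|ψ⟩‖² + ‖DΠ₁|ψ⟩‖²) )². -/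
/-! Write `a = Π₀ψ`, `b = Π₁ψ`, so `ψ = a + b` and the bracket on the left is `2 Re ⟪Da, Db⟫`.
Since `D` is a symmetric projection and `Π₀ a = a`, `⟪Da, Db⟫ = ⟪a, Π₀ D b⟫`, whose modulus is at
most `‖a‖ ‖Π₀ D b‖ ≤ ‖Π₀ D b‖`; symmetrically it is at most `‖Π₁ D a‖`. Hence
`(1/2)(2 Re ⟪Da, Db⟫)² ≤ 2 |⟪Da, Db⟫|² ≤ ‖Π₁ D a‖² + ‖Π₀ D b‖²`. -/

open scoped InnerProductSpace

namespace LinearMap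

variable {𝕜 E : Type*} [RCLike 𝕜] [NormedAddCommGroup E] [InnerProductSpace 𝕜 E]

theorem IsSymmetricProjection.norm_apply_le {p : E →ₗ[𝕜] E} (hp : p.IsSymmetricProjection)
    (x : E) : ‖p x‖ ≤ ‖x‖ := by
  obtain ⟨K, _, rfl⟩ := isSymmetricProjection_iff_eq_coe_starProjection.mp hp
  exact K.norm_starProjection_apply_le x

theorem IsSymmetricProjection.inner_apply_apply {D : E →ₗ[𝕜] E}
    (hD : D.IsSymmetricProjection) (u v : E) : ⟪D u, D v⟫_𝕜 = ⟪u, D v⟫_𝕜 := by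
  rw [hD.isSymmetric, ← Module.End.mul_apply, hD.isIdempotentElem.eq]

theorem IsSymmetricProjection.norm_inner_apply_apply_le {D P : E →ₗ[𝕜] E}
    (hD : D.IsSymmetricProjection) (hP : P.IsSymmetricProjection) (x v : E) :
    ‖⟪D (P x), D v⟫_𝕜‖ ≤ ‖x‖ * ‖P (D v)‖ := by
  have hPx : P (P x) = P x := by rw [← Module.End.mul_apply, hP.isIdempotentElem.eq]
  calc ‖⟪D (P x), D v⟫_𝕜‖ = ‖⟪P x, P (D v)⟫_𝕜‖ := by
        rw [hD.inner_apply_apply, ← hPx, hP.isSymmetric, hPx]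
    _ ≤ ‖P x‖ * ‖P (D v)‖ := norm_inner_le_norm _ _
    _ ≤ ‖x‖ * ‖P (D v)‖ := by gcongr; exact hP.norm_apply_le x

end LinearMap

theorem stmt15_general {E : Type*} [NormedAddCommGroup E] [InnerProductSpace ℂ E]
    (P₀ P₁ D : E →ₗ[ℂ] E)
    (hP₀ : P₀.IsSymmetric) (hP₀i : P₀ ∘ₗ P₀ = P₀)
    (hP₁ : P₁.IsSymmetric) (hP₁i : P₁ ∘ₗ P₁ = P₁)
    (hD : D.IsSymmetric) (hDi : D ∘ₗ D = D)
    (ψ : E) (hψ : ‖ψ‖ = 1) (him : (P₀ + P₁) ψ = ψ) :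
    1 / 2 * (‖D ψ‖ ^ 2 - (‖D (P₀ ψ)‖ ^ 2 + ‖D (P₁ ψ)‖ ^ 2)) ^ 2
      ≤ ‖P₁ (D (P₀ ψ))‖ ^ 2 + ‖P₀ (D (P₁ ψ))‖ ^ 2 := by
  have hP₀' : P₀.IsSymmetricProjection := ⟨hP₀i, hP₀⟩
  have hP₁' : P₁.IsSymmetricProjection := ⟨hP₁i, hP₁⟩
  have hD' : D.IsSymmetricProjection := ⟨hDi, hD⟩
  set x := ⟪D (P₀ ψ), D (P₁ ψ)⟫_ℂ
  have hbracket : ‖D ψ‖ ^ 2 - (‖D (P₀ ψ)‖ ^ 2 + ‖D (P₁ ψ)‖ ^ 2) = 2 * x.re := by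
    rw [show D ψ = D (P₀ ψ) + D (P₁ ψ) by rw [← map_add, ← LinearMap.add_apply, him],
      norm_add_sq (𝕜 := ℂ), RCLike.re_to_complex]
    ring
  have h₀ : ‖x‖ ≤ ‖P₀ (D (P₁ ψ))‖ := by
    simpa [hψ] using hD'.norm_inner_apply_apply_le hP₀' ψ (P₁ ψ)
  have h₁ : ‖x‖ ≤ ‖P₁ (D (P₀ ψ))‖ := by
    simpa [x, hψ, norm_inner_symm] using hD'.norm_inner_apply_apply_le hP₁' ψ (P₀ ψ)
  have hre : x.re ^ 2 ≤ ‖x‖ ^ 2 := by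
    rw [← sq_abs]; gcongr; exact Complex.abs_re_le_norm x
  rw [hbracket]
  nlinarith [norm_nonneg x]

/-- For orthogonal projectors Π₀, Π₁ with Π₀Π₁ = 0, a projector D, and a unit vector ψ in
the image of Π₀ + Π₁:
‖Π₁DΠ₀ψ‖² + ‖Π₀DΠ₁ψ‖² ≥ (1/2)(‖Dψ‖² − (‖DΠ₀ψ‖² + ‖DΠ₁ψ‖²))². -/
theorem stmt15 {E : Type*} [NormedAddCommGroup E] [InnerProductSpace ℂ E]
    [FiniteDimensional ℂ E]
    (P₀ P₁ D : E →ₗ[ℂ] E)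
    (hP₀ : P₀.IsSymmetric) (hP₀i : P₀ ∘ₗ P₀ = P₀)
    (hP₁ : P₁.IsSymmetric) (hP₁i : P₁ ∘ₗ P₁ = P₁)
    (hD : D.IsSymmetric) (hDi : D ∘ₗ D = D)
    (horth : P₀ ∘ₗ P₁ = 0) (horth' : P₁ ∘ₗ P₀ = 0)
    (ψ : E) (hψ : ‖ψ‖ = 1) (him : (P₀ + P₁) ψ = ψ) :
    1 / 2 * (‖D ψ‖ ^ 2 - (‖D (P₀ ψ)‖ ^ 2 + ‖D (P₁ ψ)‖ ^ 2)) ^ 2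
      ≤ ‖P₁ (D (P₀ ψ))‖ ^ 2 + ‖P₀ (D (P₁ ψ))‖ ^ 2 :=
  stmt15_general P₀ P₁ D hP₀ hP₀i hP₁ hP₁i hD hDi ψ hψ him
end
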